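/- For every α, β ∈ {−1, 1}: (i) the maximal collinear subsets of the configuration C²_{α,β} in ℙ²(ℝ) are exactly the thirteen sets {V₁,S₁,S₃,S₆,S₁₀}, {V₁,S₂,S₄}, {V₁,S₅,S₇}, {V₁,S₈,S₉}, {V₂,S₁,S₄,S₇,S₉}, {V₂,S₂,S₃}, {V₂,S₅,S₆}, {V₂,S₈,S₁₀}, {V₃,S₁,S₂}, {V₃,S₃,S₅}, {V₃,S₄,S₈}, {V₃,S₆,S₇}, {V₃,S₉,S₁₀} (a three-element subset is collinear if and only if it is contained in one of these sets); and (ii) every bijection f of C²_{α,β} preserving collinearity of triples in both directions satisfies f({V₁,V₂,V₃}) = {V₁,V₂,V₃}. -/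

import Mathlib

noncomputable section

/-- The real projective plane `ℙ²(ℝ)`. -/
abbrev ProjPlaneR := Projectivization ℝ (Fin 3 → ℝ)

/-- A vector `![a,b,c]` with a nonzero coordinate is nonzero. -/
theorem vne (a b c : ℝ) (i : Fin 3) (h : ![a, b, c] i ≠ 0) : ![a, b, c] ≠ 0 :=
  fun he => h (by rw [he]; simp)

/-- The point `(a : b : c)` of `ℙ²(ℝ)`. -/
def mkP (a b c : ℝ) (h : ![a, b, c] ≠ 0) : ProjPlaneR :=
  Projectivization.mk ℝ ![a, b, c] h

/-- A set of points of `ℙ²(ℝ)` lies on a common projective line iff some nonzero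
linear form vanishes on (representatives of) all of them. -/
def ProjCollinear (s : Set ProjPlaneR) : Prop :=
  ∃ f : (Fin 3 → ℝ) →ₗ[ℝ] ℝ, f ≠ 0 ∧ ∀ p ∈ s, f p.rep = 0

/-! The points of the configuration `C²_{α,β}`. -/

def V₁ : ProjPlaneR := mkP 0 1 0 (vne _ _ _ 1 (by norm_num))
def V₂ : ProjPlaneR := mkP 1 0 0 (vne _ _ _ 0 (by norm_num))
def V₃ : ProjPlaneR := mkP 0 0 1 (vne _ _ _ 2 (by simp))
def S₁ : ProjPlaneR := mkP 1 1 1 (vne _ _ _ 0 (by norm_num))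
def S₂ : ProjPlaneR := mkP 4 4 1 (vne _ _ _ 0 (by norm_num))
def S₃ : ProjPlaneR := mkP 1 4 1 (vne _ _ _ 0 (by norm_num))
def S₄ : ProjPlaneR := mkP 4 1 1 (vne _ _ _ 0 (by norm_num))
def S₅ (α : ℝ) : ProjPlaneR := mkP 1 4 (2 * α) (vne _ _ _ 0 (by norm_num))
def S₆ (α : ℝ) : ProjPlaneR := mkP 1 (2 * α) 1 (vne _ _ _ 0 (by norm_num))
def S₇ (α : ℝ) : ProjPlaneR := mkP α 2 2 (vne _ _ _ 1 (by norm_num))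
def S₈ (β : ℝ) : ProjPlaneR := mkP 4 1 (2 * β) (vne _ _ _ 0 (by norm_num))
def S₉ (β : ℝ) : ProjPlaneR := mkP (2 * β) 1 1 (vne _ _ _ 1 (by norm_num))
def S₁₀ (β : ℝ) : ProjPlaneR := mkP 2 β 2 (vne _ _ _ 0 (by norm_num))

/-- The configuration `C²_{α,β}` as a set of 13 points of `ℙ²(ℝ)`. -/
def Cconf₂ (α β : ℝ) : Set ProjPlaneR :=
  {V₁, V₂, V₃, S₁, S₂, S₃, S₄, S₅ α, S₆ α, S₇ α, S₈ β, S₉ β, S₁₀ β}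

/-! For each point of the configuration fix integer homogeneous coordinates. Three points are
collinear iff the determinant of their coordinates vanishes, so for `α, β = ±1` part (i) is a
finite computation. For part (ii), a bijection of the configuration preserving collinearity
preserves, for every point `p`, the number of pairs `(q, r)` with `{p, q, r}` collinear, and this
number singles out `V₁, V₂, V₃`. -/

open Projectivization Finset Matrix

theorem Projectivization.linearMap_apply_mk_rep_eq_zero_iff {K V W : Type*} [Field K]
    [AddCommGroup V] [Module K V] [AddCommGroup W] [Module K W] {v : V} (hv : v ≠ 0)
    (f : V →ₗ[K] W) : f (mk K v hv).rep = 0 ↔ f v = 0 := by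
  obtain ⟨a, ha⟩ := exists_smul_eq_mk_rep K v hv
  simp [← ha, Units.smul_def]

theorem projCollinear_mk_iff_det_eq_zero {u v w : Fin 3 → ℝ} (hu : u ≠ 0) (hv : v ≠ 0)
    (hw : w ≠ 0) :
    ProjCollinear {mk ℝ u hu, mk ℝ v hv, mk ℝ w hw} ↔ (of ![u, v, w]).det = 0 := by
  rw [ProjCollinear, (dotProductEquiv ℝ (Fin 3)).symm.exists_congr_left,
    ← exists_mulVec_eq_zero_iff]
  simp only [Set.forall_mem_insert, Set.mem_singleton_iff, forall_eq,
    linearMap_apply_mk_rep_eq_zero_iff]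
  simp [funext_iff, Fin.forall_fin_succ, dotProduct_comm]

theorem RingHom.comp_crossProduct {R S : Type*} [CommRing R] [CommRing S] (f : R →+* S)
    (u v : Fin 3 → R) : f ∘ (u ⨯₃ v) = (f ∘ u) ⨯₃ (f ∘ v) := by
  ext m; fin_cases m <;> simp [cross_apply]

theorem intCast_comp_ne_zero {R ι : Type*} [AddGroupWithOne R] [CharZero R] {v : ι → ℤ}
    (hv : v ≠ 0) : (Int.cast ∘ v : ι → R) ≠ 0 :=
  fun h => hv (funext fun m => by simpa using congrFun h m)

theorem exists_intCast_eq_of_sign {α : ℝ} (h : α = 1 ∨ α = -1) :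
    ∃ a : ℤ, (a = 1 ∨ a = -1) ∧ (a : ℝ) = α := by
  rcases h with rfl | rfl
  exacts [⟨1, .inl rfl, by simp⟩, ⟨-1, .inr rfl, by simp⟩]

theorem Set.BijOn.exists_perm_of_range {ι X : Type*} {e : ι → X} (he : Function.Injective e)
    {f : X → X} (hf : Set.BijOn f (Set.range e) (Set.range e)) :
    ∃ σ : Equiv.Perm ι, ∀ i, f (e i) = e (σ i) :=
  ⟨(Equiv.ofInjective e he).trans ((hf.equiv f).trans (Equiv.ofInjective e he).symm),
    fun i => by
      simp only [Equiv.trans_apply, Equiv.ofInjective_apply, Equiv.apply_ofInjective_symm]; rfl⟩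

theorem card_filter_apply_perm {ι : Type*} [Fintype ι] (R : ι → ι → ι → Prop)
    [∀ i j k, Decidable (R i j k)] (σ : Equiv.Perm ι)
    (hσ : ∀ i j k, R (σ i) (σ j) (σ k) ↔ R i j k) (i : ι) :
    #{p : ι × ι | R (σ i) p.1 p.2} = #{p : ι × ι | R i p.1 p.2} :=
  (card_equiv (σ.prodCongr σ) (by simp [hσ])).symm

namespace Cconf₂

def point (α β : ℝ) : Fin 13 → ProjPlaneR :=
  ![V₁, V₂, V₃, S₁, S₂, S₃, S₄, S₅ α, S₆ α, S₇ α, S₈ β, S₉ β, S₁₀ β]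

theorem eq_range_point (α β : ℝ) : Cconf₂ α β = Set.range (point α β) := by
  simp only [Cconf₂, point, range_cons, range_empty, Set.union_empty, Set.singleton_union]

def coords (a b : ℤ) : Fin 13 → Fin 3 → ℤ :=
  ![![0, 1, 0], ![1, 0, 0], ![0, 0, 1], ![1, 1, 1], ![4, 4, 1], ![1, 4, 1], ![4, 1, 1],
    ![1, 4, 2 * a], ![1, 2 * a, 1], ![a, 2, 2], ![4, 1, 2 * b], ![2 * b, 1, 1], ![2, b, 2]]

def coordDet (a b : ℤ) (i j k : Fin 13) : ℤ :=
  (of ![coords a b i, coords a b j, coords a b k]).det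

def lines : List (List (Fin 13)) :=
  [[0, 3, 5, 8, 12], [0, 4, 6], [0, 7, 9], [0, 10, 11], [1, 3, 6, 9, 11], [1, 4, 5], [1, 7, 8],
    [1, 10, 12], [2, 3, 4], [2, 5, 7], [2, 6, 10], [2, 8, 9], [2, 11, 12]]

theorem coordDet_eq_zero_iff {a b : ℤ} (ha : a = 1 ∨ a = -1) (hb : b = 1 ∨ b = -1)
    {i j k : Fin 13} (hij : i ≠ j) (hik : i ≠ k) (hjk : j ≠ k) :
    coordDet a b i j k = 0 ↔ ∃ L ∈ lines, i ∈ L ∧ j ∈ L ∧ k ∈ L := by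
  simp only [coordDet, det_fin_three, of_apply, cons_val_zero, cons_val_one, cons_val_two]
  revert i j k
  rcases ha with rfl | rfl <;> rcases hb with rfl | rfl <;> decide +kernel

/-- The count includes the 37 degenerate pairs (`q = p`, `r = p` or `q = r`); on top of these,
`V₁` and `V₂` lie on 18 ordered pairs of distinct collinear points, `V₃` on 10, and each `Sᵢ`
on 6, 16 or 26. -/
theorem mem_vertices_iff_card {a b : ℤ} (ha : a = 1 ∨ a = -1) (hb : b = 1 ∨ b = -1)
    (i : Fin 13) :
    i ∈ ({0, 1, 2} : Finset (Fin 13)) ↔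
      #{p : Fin 13 × Fin 13 | coordDet a b i p.1 p.2 = 0} ∈ ({47, 55} : Finset ℕ) := by
  simp only [coordDet, det_fin_three, of_apply, cons_val_zero, cons_val_one, cons_val_two]
  revert i
  rcases ha with rfl | rfl <;> rcases hb with rfl | rfl <;> decide +kernel

theorem coords_cross_ne_zero {a b : ℤ} (ha : a = 1 ∨ a = -1) (hb : b = 1 ∨ b = -1)
    {i j : Fin 13} (hij : i ≠ j) : coords a b i ⨯₃ coords a b j ≠ 0 := by
  rw [cross_apply]
  revert i j
  rcases ha with rfl | rfl <;> rcases hb with rfl | rfl <;> decide +kernel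

theorem coords_ne_zero (a b : ℤ) (i : Fin 13) : coords a b i ≠ 0 := by
  fin_cases i <;> simp [coords]

theorem point_eq_mk (a b : ℤ) (i : Fin 13) :
    point a b i =
      mk ℝ (Int.cast ∘ coords a b i) (intCast_comp_ne_zero (coords_ne_zero a b i)) := by
  fin_cases i <;> exact (mk_eq_mk_iff' ℝ _ _ _ _).2 ⟨1, by ext m; fin_cases m <;> simp [coords]⟩

theorem projCollinear_point_iff (a b : ℤ) (i j k : Fin 13) :
    ProjCollinear {point a b i, point a b j, point a b k} ↔ coordDet a b i j k = 0 := by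
  rw [point_eq_mk, point_eq_mk, point_eq_mk, projCollinear_mk_iff_det_eq_zero, coordDet,
    ← Int.cast_eq_zero (α := ℝ), Int.cast_det]
  congr! 2
  ext r c; fin_cases r <;> rfl

theorem point_injective {a b : ℤ} (ha : a = 1 ∨ a = -1) (hb : b = 1 ∨ b = -1) :
    Function.Injective (point a b) := by
  intro i j h
  by_contra hij
  rw [point_eq_mk, point_eq_mk, mk_eq_mk_iff_crossProduct_eq_zero] at h
  refine coords_cross_ne_zero ha hb hij (funext fun m => ?_)
  simpa using (congrFun ((Int.castRingHom ℝ).comp_crossProduct _ _) m).trans (congrFun h m)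

theorem image_vertices {a b : ℤ} (ha : a = 1 ∨ a = -1) (hb : b = 1 ∨ b = -1)
    {f : ProjPlaneR → ProjPlaneR}
    (hf : Set.BijOn f (Set.range (point a b)) (Set.range (point a b)))
    (hcoll : ∀ p ∈ Set.range (point a b), ∀ q ∈ Set.range (point a b),
      ∀ r ∈ Set.range (point a b), (ProjCollinear {p, q, r} ↔ ProjCollinear {f p, f q, f r})) :
    f '' {V₁, V₂, V₃} = {V₁, V₂, V₃} := by
  obtain ⟨σ, hσ⟩ := hf.exists_perm_of_range (point_injective ha hb)
  have hσcoll (i j k : Fin 13) :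
      coordDet a b (σ i) (σ j) (σ k) = 0 ↔ coordDet a b i j k = 0 := by
    rw [← projCollinear_point_iff, ← projCollinear_point_iff, ← hσ, ← hσ, ← hσ]
    exact (hcoll _ ⟨i, rfl⟩ _ ⟨j, rfl⟩ _ ⟨k, rfl⟩).symm
  set S : Finset (Fin 13) := {0, 1, 2}
  have hmaps : ∀ i ∈ S, σ i ∈ S := fun i hi => by
    rwa [mem_vertices_iff_card ha hb,
      card_filter_apply_perm (fun i j k => coordDet a b i j k = 0) σ hσcoll,
      ← mem_vertices_iff_card ha hb]
  have hσS : S.image σ = S :=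
    eq_of_subset_of_card_le (image_subset_iff.2 hmaps) (card_image_of_injective _ σ.injective).ge
  have hV : ({V₁, V₂, V₃} : Set ProjPlaneR) = point a b '' S := by
    simp [S, point, Set.image_insert_eq]
  rw [hV, Set.image_image, funext hσ, ← Set.image_image (point a b) σ, ← coe_image, hσS]

end Cconf₂

/--
For `α, β ∈ {−1,1}`:
(i) the maximal collinear subsets of `C²_{α,β}` are exactly the thirteen listed sets
(a three-element subset is collinear iff it is contained in one of them); and
(ii) every collinearity-preserving bijection `f` of `C²_{α,β}` satisfies
`f({V₁,V₂,V₃}) = {V₁,V₂,V₃}`.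
-/
theorem stmt_8 (α β : ℝ) (hα : α = 1 ∨ α = -1) (hβ : β = 1 ∨ β = -1) :
    (∀ p q r : ProjPlaneR, p ∈ Cconf₂ α β → q ∈ Cconf₂ α β → r ∈ Cconf₂ α β →
      p ≠ q → p ≠ r → q ≠ r →
      (ProjCollinear {p, q, r} ↔
        (({p, q, r} : Set ProjPlaneR) ⊆ {V₁, S₁, S₃, S₆ α, S₁₀ β} ∨
         ({p, q, r} : Set ProjPlaneR) ⊆ {V₁, S₂, S₄} ∨
         ({p, q, r} : Set ProjPlaneR) ⊆ {V₁, S₅ α, S₇ α} ∨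
         ({p, q, r} : Set ProjPlaneR) ⊆ {V₁, S₈ β, S₉ β} ∨
         ({p, q, r} : Set ProjPlaneR) ⊆ {V₂, S₁, S₄, S₇ α, S₉ β} ∨
         ({p, q, r} : Set ProjPlaneR) ⊆ {V₂, S₂, S₃} ∨
         ({p, q, r} : Set ProjPlaneR) ⊆ {V₂, S₅ α, S₆ α} ∨
         ({p, q, r} : Set ProjPlaneR) ⊆ {V₂, S₈ β, S₁₀ β} ∨
         ({p, q, r} : Set ProjPlaneR) ⊆ {V₃, S₁, S₂} ∨
         ({p, q, r} : Set ProjPlaneR) ⊆ {V₃, S₃, S₅ α} ∨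
         ({p, q, r} : Set ProjPlaneR) ⊆ {V₃, S₄, S₈ β} ∨
         ({p, q, r} : Set ProjPlaneR) ⊆ {V₃, S₆ α, S₇ α} ∨
         ({p, q, r} : Set ProjPlaneR) ⊆ {V₃, S₉ β, S₁₀ β}))) ∧
    (∀ f : ProjPlaneR → ProjPlaneR,
      Set.BijOn f (Cconf₂ α β) (Cconf₂ α β) →
      (∀ p ∈ Cconf₂ α β, ∀ q ∈ Cconf₂ α β, ∀ r ∈ Cconf₂ α β,
        (ProjCollinear {p, q, r} ↔ ProjCollinear {f p, f q, f r})) →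
      f '' ({V₁, V₂, V₃} : Set ProjPlaneR) = {V₁, V₂, V₃}) := by
  obtain ⟨a, ha, rfl⟩ := exists_intCast_eq_of_sign hα
  obtain ⟨b, hb, rfl⟩ := exists_intCast_eq_of_sign hβ
  simp only [Cconf₂.eq_range_point]
  refine ⟨?_, fun _ => Cconf₂.image_vertices ha hb⟩
  rintro _ _ _ ⟨i, rfl⟩ ⟨j, rfl⟩ ⟨k, rfl⟩ hij hik hjk
  rw [Cconf₂.projCollinear_point_iff, Cconf₂.coordDet_eq_zero_iff ha hb (ne_of_apply_ne _ hij)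
    (ne_of_apply_ne _ hik) (ne_of_apply_ne _ hjk)]
  -- both sides become the same disjunction of equations `point a b i = point a b n`
  simp only [Cconf₂.lines, List.mem_cons, exists_eq_or_imp, exists_eq_left, List.not_mem_nil,
    or_false, ← (Cconf₂.point_injective ha hb).eq_iff, Set.insert_subset_iff, Set.mem_insert_iff,
    Set.mem_singleton_iff, Set.singleton_subset_iff]
  simp only [Cconf₂.point, Matrix.cons_val]

end
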